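/- arXiv:hep-th/9611160 — 2 statements merged into one kernel-verified Lean document; each statement's English description precedes it below -/
import Mathlib

section
/- The radical of the Shapovalov form on the Verma module V(h,c), i.e. the set {x ∈ V(h,c) : ⟨x, y⟩ = 0 for all y ∈ V(h,c)}, is exactly the maximal proper submodule of V(h,c). -/
/-- A representation of the Virasoro algebra on a complex vector space `V`:
a family of operators `L n` (`n : ℤ`) and an operator `C` satisfying the Virasoro
commutation relations
`[L m, L n] = (n - m) L (m+n) + (C/12)(n³ - n) δ_{m+n,0}` and `[C, L n] = 0`. -/
structure VirasoroRep (V : Type) [AddCommGroup V] [Module ℂ V] where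
  L : ℤ → Module.End ℂ V
  C : Module.End ℂ V
  comm_LL : ∀ m n : ℤ, L m * L n - L n * L m =
      ((n : ℂ) - (m : ℂ)) • L (m + n) +
        (if m + n = 0 then (((n : ℂ) ^ 3 - (n : ℂ)) / 12) else 0) • C
  comm_CL : ∀ n : ℤ, C * L n - L n * C = 0

namespace VirasoroRep

variable {V W : Type} [AddCommGroup V] [Module ℂ V] [AddCommGroup W] [Module ℂ W]

/-- `v` is a singular vector of weight `(h, c)`: it is annihilated by all `L (-n)`, `n ≥ 1`,
and is an eigenvector of `L 0` and `C` with eigenvalues `h` resp. `c`. -/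
def IsSingular (ρ : VirasoroRep V) (h c : ℂ) (v : V) : Prop :=
  (∀ n : ℤ, 1 ≤ n → ρ.L (-n) v = 0) ∧ ρ.L 0 v = h • v ∧ ρ.C v = c • v

/-- A linear subspace invariant under the Virasoro action, i.e. an `𝔏`-submodule. -/
def Invariant (ρ : VirasoroRep V) (p : Submodule ℂ V) : Prop :=
  (∀ n : ℤ, ∀ x ∈ p, ρ.L n x ∈ p) ∧ ∀ x ∈ p, ρ.C x ∈ p

/-- The `𝔏`-submodule `U(𝔏)·v` generated by a vector `v`: the smallest invariant subspace
containing `v`. -/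
def gen (ρ : VirasoroRep V) (v : V) : Submodule ℂ V :=
  sInf {p : Submodule ℂ V | ρ.Invariant p ∧ v ∈ p}

/-- The vector `v` generates the module: `U(𝔏)·v` is everything. -/
def Generates (ρ : VirasoroRep V) (v : V) : Prop :=
  ∀ p : Submodule ℂ V, ρ.Invariant p → v ∈ p → p = ⊤

/-- A homomorphism of Virasoro modules: a linear map intertwining the actions. -/
def IsHom (ρ : VirasoroRep V) (σ : VirasoroRep W) (f : V →ₗ[ℂ] W) : Prop :=
  (∀ (n : ℤ) (x : V), f (ρ.L n x) = σ.L n (f x)) ∧ ∀ x : V, f (ρ.C x) = σ.C (f x)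

end VirasoroRep

/-- A bundled module of the Virasoro algebra (a complex vector space together with a
Virasoro representation on it). -/
structure VirasoroModule where
  carrier : Type
  [isAddCommGroup : AddCommGroup carrier]
  [isModule : Module ℂ carrier]
  rep : VirasoroRep carrier

attribute [instance] VirasoroModule.isAddCommGroup VirasoroModule.isModule

/-- `M` together with the singular vector `v` is a Verma module of weight `(h, c)`:
`v` is singular of weight `(h, c)`, generates `M`, and the pair has the universal property
that any singular vector of weight `(h, c)` in any Virasoro module receives a unique
homomorphism from `M` sending `v` to it. -/
def IsVermaModule (h c : ℂ) (M : VirasoroModule) (v : M.carrier) : Prop :=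
  M.rep.IsSingular h c v ∧ M.rep.Generates v ∧
    ∀ (W : VirasoroModule) (w : W.carrier), W.rep.IsSingular h c w →
      ∃! f : M.carrier →ₗ[ℂ] W.carrier, M.rep.IsHom W.rep f ∧ f v = w

/-!
The radical `ker B` is stable under every `L n` by contravariance, hence under `C`, which is a
combination of `[L (-2), L 2]` and `L 0`; it misses `v` because `B v v = 1`, so it is a proper
submodule.

Conversely, `M` is spanned by the words `L (n₁ + 1) ⋯ L (nₖ + 1) v`, so every vector is `a • v`
plus a sum of `L 0`-eigenvectors with eigenvalues `≠ h`, and those are orthogonal to `v`. If `x`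
lies in a proper submodule `p`, applying to `x` a polynomial in `L 0` that kills these
eigenvalues but not `h` puts a nonzero multiple of `a • v` into `p`, so `a = 0` and `B x v = 0`.
Thus `v` lies in the orthogonal of `p`, which is invariant and therefore all of `M`: `p` lies in
the radical.
-/

open Polynomial

namespace Module.End

variable {K V : Type*} [Field K] [AddCommGroup V] [Module K V] {f : End K V} {h : K}

lemma exists_aeval_eq_zero_of_mem_iSup_eigenspace_ne {y : V}
    (hy : y ∈ ⨆ μ : {μ : K // μ ≠ h}, f.eigenspace μ) :
    ∃ q : K[X], q.eval h ≠ 0 ∧ aeval f q y = 0 := by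
  induction hy using Submodule.iSup_induction' with
  | mem μ y hy =>
    refine ⟨X - C (μ : K), by simpa [sub_eq_zero] using μ.2.symm, ?_⟩
    rw [aeval_apply_of_mem_apply_eq_smul (mem_eigenspace_iff.mp hy)]
    simp
  | zero => exact ⟨1, by simp, map_zero _⟩
  | add y₁ y₂ _ _ ih₁ ih₂ =>
    obtain ⟨q₁, hq₁, hy₁⟩ := ih₁
    obtain ⟨q₂, hq₂, hy₂⟩ := ih₂
    refine ⟨q₁ * q₂, by simp [hq₁, hq₂], ?_⟩
    have h₁ : aeval f (q₁ * q₂) y₁ = 0 := by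
      rw [mul_comm, aeval_mul, mul_apply, hy₁, map_zero]
    have h₂ : aeval f (q₁ * q₂) y₂ = 0 := by
      rw [aeval_mul, mul_apply, hy₂, map_zero]
    rw [map_add, h₁, h₂, add_zero]

lemma smul_mem_of_sub_mem_iSup_eigenspace_ne {p : Submodule K V} (hp : p ≤ p.comap f)
    {v x : V} {a : K} (hv : f v = h • v) (hx : x ∈ p)
    (hxv : x - a • v ∈ ⨆ μ : {μ : K // μ ≠ h}, f.eigenspace μ) : a • v ∈ p := by
  obtain ⟨q, hqh, hq⟩ := exists_aeval_eq_zero_of_mem_iSup_eigenspace_ne hxv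
  have hmem : aeval f q x ∈ p := aeval_apply_smul_mem_of_le_comap hx q f hp
  have hav : f (a • v) = h • a • v := by rw [map_smul, hv, smul_comm]
  rw [map_sub, sub_eq_zero, aeval_apply_of_mem_apply_eq_smul hav] at hq
  rwa [hq, Submodule.smul_mem_iff p hqh] at hmem

lemma apply_eq_zero_of_mem_iSup_eigenspace_ne (B : LinearMap.BilinForm K V)
    (hB : ∀ x y, B (f x) y = B x (f y)) {v : V} (hv : f v = h • v) {y : V}
    (hy : y ∈ ⨆ μ : {μ : K // μ ≠ h}, f.eigenspace μ) : B y v = 0 := by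
  suffices ⨆ μ : {μ : K // μ ≠ h}, f.eigenspace μ ≤ LinearMap.ker (B.flip v) from this hy
  refine iSup_le fun μ x hx => ?_
  change B x v = 0
  have hfx := mem_eigenspace_iff.mp hx
  have key : (μ : K) * B x v = h * B x v := by
    simpa [hfx, hv] using hB x v
  exact mul_right_cancel₀ (sub_ne_zero.mpr μ.2) (by linear_combination key)

end Module.End

namespace VirasoroRep

variable {V : Type} [AddCommGroup V] [Module ℂ V] (ρ : VirasoroRep V)

lemma L_L_apply (m n : ℤ) (x : V) :
    ρ.L m (ρ.L n x) = ρ.L n (ρ.L m x) +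
      (((n : ℂ) - m) • ρ.L (m + n) x +
        (if m + n = 0 then ((n : ℂ) ^ 3 - n) / 12 else 0) • ρ.C x) := by
  rw [← sub_eq_iff_eq_add']
  simpa only [LinearMap.sub_apply, LinearMap.add_apply, LinearMap.smul_apply,
    Module.End.mul_apply] using LinearMap.congr_fun (ρ.comm_LL m n) x

lemma C_L_apply (n : ℤ) (x : V) : ρ.C (ρ.L n x) = ρ.L n (ρ.C x) := by
  simpa [sub_eq_zero] using LinearMap.congr_fun (ρ.comm_CL n) x

lemma C_apply_eq (x : V) :
    ρ.C x = (2 : ℂ) • (ρ.L (-2) (ρ.L 2 x) - ρ.L 2 (ρ.L (-2) x)) - (8 : ℂ) • ρ.L 0 x := by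
  rw [ρ.L_L_apply (-2) 2 x, if_pos (by norm_num)]
  push_cast
  module

lemma invariant_of_forall_L_mem {p : Submodule ℂ V} (hp : ∀ n : ℤ, ∀ x ∈ p, ρ.L n x ∈ p) :
    ρ.Invariant p := by
  refine ⟨hp, fun x hx => ?_⟩
  rw [C_apply_eq]
  exact p.sub_mem (p.smul_mem _ (p.sub_mem (hp _ _ (hp _ _ hx)) (hp _ _ (hp _ _ hx))))
    (p.smul_mem _ (hp _ _ hx))

def IsContravariant (B : LinearMap.BilinForm ℂ V) : Prop :=
  ∀ (n : ℤ) (x y : V), B (ρ.L n x) y = B x (ρ.L (-n) y)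

variable {ρ} {B : LinearMap.BilinForm ℂ V}

lemma IsContravariant.invariant_ker (hB : ρ.IsContravariant B) :
    ρ.Invariant (LinearMap.ker B) :=
  ρ.invariant_of_forall_L_mem fun n x hx => by
    ext y
    simp [hB n x y, LinearMap.mem_ker.mp hx]

lemma IsContravariant.invariant_orthogonal (hB : ρ.IsContravariant B) {p : Submodule ℂ V}
    (hp : ρ.Invariant p) : ρ.Invariant (B.orthogonal p) :=
  ρ.invariant_of_forall_L_mem fun n y hy w hw => by
    change B w (ρ.L n y) = 0
    rw [← neg_neg n, ← hB]
    exact hy _ (hp.1 (-n) w hw)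

variable (ρ) in
def word (v : V) : List ℕ → V
  | [] => v
  | n :: l => ρ.L (n + 1) (word v l)

variable {h c : ℂ} {v : V}

lemma IsSingular.L_zero_word (hs : ρ.IsSingular h c v) (l : List ℕ) :
    ρ.L 0 (ρ.word v l) = (h + ((l.length + l.sum : ℕ) : ℂ)) • ρ.word v l := by
  induction l with
  | nil => simpa [word] using hs.2.1
  | cons n l ih =>
    rw [word, ρ.L_L_apply, ih, if_neg (by omega)]
    simp only [map_smul, zero_add, zero_smul, add_zero, List.length_cons, List.sum_cons]
    push_cast
    module

lemma IsSingular.C_word (hs : ρ.IsSingular h c v) (l : List ℕ) :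
    ρ.C (ρ.word v l) = c • ρ.word v l := by
  induction l with
  | nil => exact hs.2.2
  | cons n l ih => rw [word, C_L_apply, ih, map_smul]

lemma L_succ_mem_span_word (n : ℕ) {x : V} (hx : x ∈ Submodule.span ℂ (Set.range (ρ.word v))) :
    ρ.L (n + 1) x ∈ Submodule.span ℂ (Set.range (ρ.word v)) := by
  suffices Submodule.span ℂ (Set.range (ρ.word v)) ≤
      (Submodule.span ℂ (Set.range (ρ.word v))).comap (ρ.L (n + 1)) from this hx
  rw [Submodule.span_le]
  rintro _ ⟨l, rfl⟩
  exact Submodule.subset_span ⟨n :: l, rfl⟩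

lemma IsSingular.L_word_mem_span (hs : ρ.IsSingular h c v) (l : List ℕ) (m : ℤ) :
    ρ.L m (ρ.word v l) ∈ Submodule.span ℂ (Set.range (ρ.word v)) := by
  induction l generalizing m with
  | nil =>
    rcases lt_trichotomy m 0 with hm | rfl | hm
    · have hv : ρ.L m v = 0 := by simpa using hs.1 (-m) (by omega)
      rw [word, hv]
      exact zero_mem _
    · rw [word, hs.2.1]
      exact Submodule.smul_mem _ _ (Submodule.subset_span ⟨[], rfl⟩)
    · obtain ⟨k, rfl⟩ : ∃ k : ℕ, m = k + 1 := ⟨(m - 1).toNat, by omega⟩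
      exact Submodule.subset_span ⟨[k], rfl⟩
  | cons n l ih =>
    have hw : ρ.word v l ∈ Submodule.span ℂ (Set.range (ρ.word v)) :=
      Submodule.subset_span ⟨l, rfl⟩
    rw [word, ρ.L_L_apply, hs.C_word]
    exact add_mem (L_succ_mem_span_word n (ih m))
      (add_mem (Submodule.smul_mem _ _ (ih _))
        (Submodule.smul_mem _ _ (Submodule.smul_mem _ _ hw)))

lemma IsSingular.span_word_eq_top (hs : ρ.IsSingular h c v) (hg : ρ.Generates v) :
    Submodule.span ℂ (Set.range (ρ.word v)) = ⊤ := by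
  refine hg _ (ρ.invariant_of_forall_L_mem fun m x hx => ?_) (Submodule.subset_span ⟨[], rfl⟩)
  suffices Submodule.span ℂ (Set.range (ρ.word v)) ≤
      (Submodule.span ℂ (Set.range (ρ.word v))).comap (ρ.L m) from this hx
  rw [Submodule.span_le]
  rintro _ ⟨l, rfl⟩
  exact hs.L_word_mem_span l m

lemma IsSingular.mem_span_sup_iSup_eigenspace_ne (hs : ρ.IsSingular h c v)
    (hg : ρ.Generates v) (x : V) :
    x ∈ (ℂ ∙ v) ⊔ ⨆ μ : {μ : ℂ // μ ≠ h}, (ρ.L 0).eigenspace μ := by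
  suffices Submodule.span ℂ (Set.range (ρ.word v)) ≤
      (ℂ ∙ v) ⊔ ⨆ μ : {μ : ℂ // μ ≠ h}, (ρ.L 0).eigenspace μ by
    exact this (hs.span_word_eq_top hg ▸ Submodule.mem_top)
  rw [Submodule.span_le]
  rintro _ ⟨_ | ⟨n, l⟩, rfl⟩
  · exact Submodule.mem_sup_left (Submodule.mem_span_singleton_self v)
  · refine Submodule.mem_sup_right (Submodule.mem_iSup_of_mem ⟨_, ?_⟩
      (Module.End.mem_eigenspace_iff.mpr (hs.L_zero_word (n :: l))))
    rw [ne_eq, add_eq_left, Nat.cast_eq_zero, List.length_cons]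
    omega

lemma IsContravariant.apply_eq_zero_of_mem_invariant (hB : ρ.IsContravariant B)
    (hs : ρ.IsSingular h c v) (hg : ρ.Generates v) {p : Submodule ℂ V} (hp : ρ.Invariant p)
    (hvp : v ∉ p) {x : V} (hx : x ∈ p) : B x v = 0 := by
  obtain ⟨u, hu, y, hy, rfl⟩ := Submodule.mem_sup.mp (hs.mem_span_sup_iSup_eigenspace_ne hg x)
  obtain ⟨a, rfl⟩ := Submodule.mem_span_singleton.mp hu
  have hav : a • v ∈ p := Module.End.smul_mem_of_sub_mem_iSup_eigenspace_ne
    (fun z hz => hp.1 0 z hz) hs.2.1 hx (by simpa using hy)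
  have ha : a = 0 := by
    by_contra ha
    exact hvp ((p.smul_mem_iff ha).mp hav)
  have hL0 : ∀ x y, B (ρ.L 0 x) y = B x (ρ.L 0 y) := by simpa using hB 0
  simp [ha, Module.End.apply_eq_zero_of_mem_iSup_eigenspace_ne B hL0 hs.2.1 hy]

lemma IsContravariant.le_ker_of_invariant (hB : ρ.IsContravariant B)
    (hs : ρ.IsSingular h c v) (hg : ρ.Generates v) {p : Submodule ℂ V} (hp : ρ.Invariant p)
    (hpt : p ≠ ⊤) : p ≤ LinearMap.ker B := by
  have hvp : v ∉ p := fun hv => hpt (hg p hp hv)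
  have horth : B.orthogonal p = ⊤ := hg _ (hB.invariant_orthogonal hp)
    fun w hw => hB.apply_eq_zero_of_mem_invariant hs hg hp hvp hw
  intro x hx
  ext y
  exact (horth ▸ Submodule.mem_top : y ∈ B.orthogonal p) x hx

end VirasoroRep

/-- The radical of the Shapovalov form on the Verma module `V(h,c)` is exactly the maximal
proper submodule (the sum of all proper invariant submodules). -/
theorem shapovalov_radical_eq_maximal_proper_submodule (h c : ℂ)
    (M : VirasoroModule) (v : M.carrier) (hV : IsVermaModule h c M v)
    (B : M.carrier →ₗ[ℂ] M.carrier →ₗ[ℂ] ℂ) (hBv : B v v = 1)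
    (hBcontra : ∀ (n : ℤ) (x y : M.carrier), B (M.rep.L n x) y = B x (M.rep.L (-n) y)) :
    ∀ x : M.carrier, (∀ y : M.carrier, B x y = 0) ↔
      x ∈ sSup {p : Submodule ℂ M.carrier | M.rep.Invariant p ∧ p ≠ ⊤} := by
  obtain ⟨hs, hg, -⟩ := hV
  have hB : M.rep.IsContravariant B := hBcontra
  have hv : v ∉ LinearMap.ker B := fun hv => by
    simpa [hBv] using LinearMap.congr_fun (LinearMap.mem_ker.mp hv) v
  have hker : LinearMap.ker B = sSup {p | M.rep.Invariant p ∧ p ≠ ⊤} :=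
    le_antisymm (le_sSup ⟨hB.invariant_ker, fun htop => hv (htop ▸ Submodule.mem_top)⟩)
      (sSup_le fun p ⟨hp, hpt⟩ => hB.le_ker_of_invariant hs hg hp hpt)
  intro x
  rw [← hker, LinearMap.mem_ker, LinearMap.ext_iff]
  rfl
end

section
/- Let V be an irreducible (simple) module of the Virasoro algebra on which C acts as a scalar c, such that V is the direct sum of the generalized eigenspaces of L_0, and such that there exists an eigenvalue h₀ with nonzero generalized eigenspace whose real part is minimal among the eigenvalues with nonzero generalized eigenspace. Then V is a lowest weight module: V = U(𝔏)·v for some singular vector v ∈ V. -/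
namespace Module.End

variable {R M : Type*} [CommRing R] [AddCommGroup M] [Module R M]

lemma sub_smul_one_pow_mul_of_commutator_eq_smul {f g : End R M} {a : R}
    (h : f * g - g * f = a • g) (μ : R) (k : ℕ) :
    (f - (μ + a) • 1) ^ k * g = g * (f - μ • 1) ^ k := by
  have hstep : (f - (μ + a) • 1) * g = g * (f - μ • 1) := by
    rw [sub_mul, mul_sub, eq_add_of_sub_eq' h, smul_mul_assoc, mul_smul_comm, one_mul,
      mul_one, add_smul]
    abel
  induction k with
  | zero => simp
  | succ k ih => rw [pow_succ, pow_succ, mul_assoc, hstep, ← mul_assoc, ih, mul_assoc]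

lemma apply_mem_maxGenEigenspace_of_commutator_eq_smul {f g : End R M} {a : R}
    (h : f * g - g * f = a • g) {μ : R} {x : M} (hx : x ∈ f.maxGenEigenspace μ) :
    g x ∈ f.maxGenEigenspace (μ + a) := by
  obtain ⟨k, hk⟩ := (mem_maxGenEigenspace f μ x).mp hx
  refine (mem_maxGenEigenspace f _ _).mpr ⟨k, ?_⟩
  rw [← mul_apply, sub_smul_one_pow_mul_of_commutator_eq_smul h, mul_apply, hk, map_zero]

end Module.End

namespace VirasoroRep

open Module.End

variable {V : Type} [AddCommGroup V] [Module ℂ V] (ρ : VirasoroRep V)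

lemma L_zero_mul_sub_mul_L_zero (n : ℤ) :
    ρ.L 0 * ρ.L n - ρ.L n * ρ.L 0 = (n : ℂ) • ρ.L n := by
  rw [ρ.comm_LL 0 n, zero_add, Int.cast_zero, sub_zero]
  split_ifs with hn
  · subst hn; simp
  · rw [zero_smul, add_zero]

lemma L_apply_mem_maxGenEigenspace {μ : ℂ} {x : V} (hx : x ∈ (ρ.L 0).maxGenEigenspace μ)
    (n : ℤ) : ρ.L n x ∈ (ρ.L 0).maxGenEigenspace (μ + n) :=
  apply_mem_maxGenEigenspace_of_commutator_eq_smul (ρ.L_zero_mul_sub_mul_L_zero n) hx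

lemma L_neg_apply_eq_zero_of_forall_re_le {h₀ : ℂ}
    (h₀min : ∀ μ : ℂ, (ρ.L 0).maxGenEigenspace μ ≠ ⊥ → h₀.re ≤ μ.re)
    {x : V} (hx : x ∈ (ρ.L 0).maxGenEigenspace h₀) {n : ℤ} (hn : 1 ≤ n) :
    ρ.L (-n) x = 0 := by
  have hbot : (ρ.L 0).maxGenEigenspace (h₀ + (-n : ℤ)) = ⊥ := by
    by_contra hne
    have hre := h₀min _ hne
    have hn' : (1 : ℝ) ≤ n := by exact_mod_cast hn
    rw [Int.cast_neg, ← sub_eq_add_neg, Complex.sub_re, Complex.intCast_re] at hre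
    linarith
  have hmem := ρ.L_apply_mem_maxGenEigenspace hx (-n)
  rwa [hbot, Submodule.mem_bot] at hmem

lemma generates_of_irreducible (hirr : ∀ p : Submodule ℂ V, ρ.Invariant p → p = ⊥ ∨ p = ⊤)
    {v : V} (hv : v ≠ 0) : ρ.Generates v := fun p hp hvp =>
  (hirr p hp).resolve_left fun hbot => hv (by simpa [hbot] using hvp)

end VirasoroRep

theorem irreducible_virasoro_module_is_lowest_weight_general
    (V : Type) [AddCommGroup V] [Module ℂ V] (ρ : VirasoroRep V) (c : ℂ)
    (hC : ∀ x : V, ρ.C x = c • x)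
    (hirr : ∀ p : Submodule ℂ V, ρ.Invariant p → p = ⊥ ∨ p = ⊤)
    (h₀ : ℂ) (h₀ne : Module.End.maxGenEigenspace (ρ.L 0) h₀ ≠ ⊥)
    (h₀min : ∀ μ : ℂ, Module.End.maxGenEigenspace (ρ.L 0) μ ≠ ⊥ → h₀.re ≤ μ.re) :
    ∃ v : V, v ≠ 0 ∧ (∃ h' : ℂ, ρ.IsSingular h' c v) ∧ ρ.Generates v := by
  have hev : (ρ.L 0).HasEigenvalue h₀ :=
    Module.End.HasUnifEigenvalue.lt zero_lt_one h₀ne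
  obtain ⟨v, hv⟩ := hev.exists_hasEigenvector
  have hv_mem : v ∈ (ρ.L 0).maxGenEigenspace h₀ :=
    Module.End.eigenspace_le_maxGenEigenspace hv.1
  exact ⟨v, hv.2, ⟨h₀, fun n hn => ρ.L_neg_apply_eq_zero_of_forall_re_le h₀min hv_mem hn,
    hv.apply_eq_smul, hC v⟩, ρ.generates_of_irreducible hirr hv.2⟩

/-- An irreducible Virasoro module on which `C` acts as the scalar `c`, which is the direct
sum of the generalized eigenspaces of `L 0` and has an eigenvalue of minimal real part
(among those with nonzero generalized eigenspace), is a lowest weight module: it is generated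
by a singular vector. -/
theorem irreducible_virasoro_module_is_lowest_weight
    (V : Type) [AddCommGroup V] [Module ℂ V] (ρ : VirasoroRep V) (c : ℂ)
    (hC : ∀ x : V, ρ.C x = c • x)
    (hirr : ∀ p : Submodule ℂ V, ρ.Invariant p → p = ⊥ ∨ p = ⊤)
    (hnontriv : (⊥ : Submodule ℂ V) ≠ ⊤)
    (hsum : ⨆ μ : ℂ, Module.End.maxGenEigenspace (ρ.L 0) μ = ⊤)
    (h₀ : ℂ) (h₀ne : Module.End.maxGenEigenspace (ρ.L 0) h₀ ≠ ⊥)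
    (h₀min : ∀ μ : ℂ, Module.End.maxGenEigenspace (ρ.L 0) μ ≠ ⊥ → h₀.re ≤ μ.re) :
    ∃ v : V, v ≠ 0 ∧ (∃ h' : ℂ, ρ.IsSingular h' c v) ∧ ρ.Generates v :=
  irreducible_virasoro_module_is_lowest_weight_general V ρ c hC hirr h₀ h₀ne h₀min
end
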